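/- Let ρ₀ be an n×n positive definite density matrix and let ν be an n×n Hermitian matrix. Then for every s ∈ [0,1], Tr[L_{x^s}(ρ₀,ν) · L_{x^{1−s}}(ρ₀,ν)] ≤ Tr[L_{√x}(ρ₀,ν)²], where L_{x^s}, L_{x^{1−s}}, and L_{√x} are the Fréchet derivatives associated with the functions x ↦ x^s, x ↦ x^{1−s}, and x ↦ √x. In particular, the second-order coefficient ξ_s in the quantum Chernoff bound expansion is maximized at s = 1/2. -/

import Mathlib

open Matrix
open scoped ComplexOrder

noncomputable section

/-- Hilbert–Schmidt (Frobenius) norm of a complex matrix. -/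
def hsNorm {ι κ : Type*} [Fintype ι] [Fintype κ] (A : Matrix ι κ ℂ) : ℝ :=
  Real.sqrt (∑ i, ∑ j, ‖A i j‖ ^ 2)

/-- First divided difference `[f,λ]^{[1]}_{k,l}`. -/
def dd1 {n : ℕ} (f : ℝ → ℝ) (lam : Fin n → ℝ) (k l : Fin n) : ℝ :=
  if lam k = lam l then deriv f (lam k)
  else (f (lam k) - f (lam l)) / (lam k - lam l)

/-- Second divided difference `[f,λ]^{[2]}_{k,l,m}`. -/
def dd2 {n : ℕ} (f : ℝ → ℝ) (lam : Fin n → ℝ) (k l m : Fin n) : ℝ :=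
  if lam k = lam m then
    if lam k = lam l then deriv (deriv f) (lam k) / 2
    else (deriv f (lam k) - dd1 f lam k l) / (lam k - lam l)
  else (dd1 f lam k l - dd1 f lam m l) / (lam k - lam m)

/-- The Fréchet derivative `L_f(A,E) = Σ_{k,l} [f,λ]^{[1]}_{k,l} ⟨φ_k, E φ_l⟩ |φ_k⟩⟨φ_l|`,
where the orthonormal eigenbasis `(φ_k)` of `A` is given by the columns of the unitary `U`
and `lam` are the corresponding eigenvalues. -/
def frechet {n : ℕ} (f : ℝ → ℝ) (U : Matrix (Fin n) (Fin n) ℂ) (lam : Fin n → ℝ)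
    (E : Matrix (Fin n) (Fin n) ℂ) : Matrix (Fin n) (Fin n) ℂ :=
  U * (Matrix.of fun k l => (dd1 f lam k l : ℂ) * ((Uᴴ * E * U) k l)) * Uᴴ

/-- The second matrix derivative
`D²_f(A,E) = 2 Σ_{k,l,m} [f,λ]^{[2]}_{k,l,m} ⟨φ_k, E φ_l⟩⟨φ_l, E φ_m⟩ |φ_k⟩⟨φ_m|`. -/
def matD2 {n : ℕ} (f : ℝ → ℝ) (U : Matrix (Fin n) (Fin n) ℂ) (lam : Fin n → ℝ)
    (E : Matrix (Fin n) (Fin n) ℂ) : Matrix (Fin n) (Fin n) ℂ :=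
  U * (Matrix.of fun k m =>
    2 * ∑ l, (dd2 f lam k l m : ℂ) * ((Uᴴ * E * U) k l) * ((Uᴴ * E * U) l m)) * Uᴴ

/-- Primary matrix function `f(A) = Σ_k f(λ_k)|φ_k⟩⟨φ_k|` in the eigenbasis given by `U`. -/
def pmfun {n : ℕ} (f : ℝ → ℝ) (U : Matrix (Fin n) (Fin n) ℂ) (lam : Fin n → ℝ) :
    Matrix (Fin n) (Fin n) ℂ :=
  U * Matrix.diagonal (fun k => (f (lam k) : ℂ)) * Uᴴ

/-- Primary matrix function of a Hermitian matrix: matrix power `A^s` (with `0^s = 0` for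
`s ≠ 0`), given by the continuous functional calculus. -/
def mpow {ι : Type*} [Fintype ι] [DecidableEq ι] (s : ℝ) (A : Matrix ι ι ℂ) : Matrix ι ι ℂ :=
  cfc (fun x : ℝ => x ^ s) A

/-- Primary-matrix-function logarithm (`log 0 = 0` on the kernel). -/
def mlog {ι : Type*} [Fintype ι] [DecidableEq ι] (A : Matrix ι ι ℂ) : Matrix ι ι ℂ :=
  cfc Real.log A

/-- Primary-matrix-function square root; agrees with the positive semidefinite square root on
positive semidefinite matrices. -/
def msqrt {ι : Type*} [Fintype ι] [DecidableEq ι] (A : Matrix ι ι ℂ) : Matrix ι ι ℂ :=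
  cfc Real.sqrt A

/-- Von Neumann entropy `S(ρ) = −Tr[ρ log ρ]` (with `0 log 0 = 0`). -/
def vnEntropy {n : ℕ} (ρ : Matrix (Fin n) (Fin n) ℂ) : ℝ :=
  -(Matrix.trace (cfc (fun x : ℝ => x * Real.log x) ρ)).re

/-- Quantum relative entropy `D(ρ₁‖ρ₂) = Tr[ρ₁ (log ρ₁ − log ρ₂)]`. -/
def qre {n : ℕ} (ρ₁ ρ₂ : Matrix (Fin n) (Fin n) ℂ) : ℝ :=
  (Matrix.trace (ρ₁ * (mlog ρ₁ - mlog ρ₂))).re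

/-- `ξ_s(ρ₁,ρ₂) = −log Tr[ρ₁^s ρ₂^{1−s}]`. -/
def xiS {n : ℕ} (s : ℝ) (ρ₁ ρ₂ : Matrix (Fin n) (Fin n) ℂ) : ℝ :=
  -Real.log ((Matrix.trace (mpow s ρ₁ * mpow (1 - s) ρ₂)).re)

/-- Quantum fidelity `F(ρ₁,ρ₂) = (Tr[√(√ρ₁ ρ₂ √ρ₁)])²`. -/
def fidelity {n : ℕ} (ρ₁ ρ₂ : Matrix (Fin n) (Fin n) ℂ) : ℝ :=
  ((Matrix.trace (msqrt (msqrt ρ₁ * ρ₂ * msqrt ρ₁))).re) ^ 2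

/-- Squared Bures distance `d_B²(ρ₁,ρ₂) = 2(1 − √F(ρ₁,ρ₂))`. -/
def buresSq {n : ℕ} (ρ₁ ρ₂ : Matrix (Fin n) (Fin n) ℂ) : ℝ :=
  2 * (1 - Real.sqrt (fidelity ρ₁ ρ₂))

/-- The upper-left `m×m` block of a matrix written in the eigenbasis of the unperturbed state. -/
def blockB {n : ℕ} (m : ℕ) (M : Matrix (Fin n) (Fin n) ℂ) :
    Matrix {k : Fin n // k.val < m} {k : Fin n // k.val < m} ℂ :=
  Matrix.of fun k l => M k.val l.val

/-- The upper-right block. -/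
def blockC {n : ℕ} (m : ℕ) (M : Matrix (Fin n) (Fin n) ℂ) :
    Matrix {k : Fin n // k.val < m} {k : Fin n // m ≤ k.val} ℂ :=
  Matrix.of fun k l => M k.val l.val

/-- The lower-left block. -/
def blockC' {n : ℕ} (m : ℕ) (M : Matrix (Fin n) (Fin n) ℂ) :
    Matrix {k : Fin n // m ≤ k.val} {k : Fin n // k.val < m} ℂ :=
  Matrix.of fun k l => M k.val l.val

/-- The lower-right block. -/
def blockD {n : ℕ} (m : ℕ) (M : Matrix (Fin n) (Fin n) ℂ) :
    Matrix {k : Fin n // m ≤ k.val} {k : Fin n // m ≤ k.val} ℂ :=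
  Matrix.of fun k l => M k.val l.val

/-- The extended first divided difference `[x^s,λ]^{[1,0]}_{k,l}`. -/
def dd10 {n : ℕ} (s : ℝ) (lam : Fin n → ℝ) (k l : Fin n) : ℝ :=
  if lam k = lam l then (if lam k = 0 then 1 else s * lam k ^ (s - 1))
  else (lam k ^ s - lam l ^ s) / (lam k - lam l)

/-- The first-order term `G` in the support-extending expansion of `(ρ₀+ν)^s`:
in the eigenbasis of `ρ₀` (given by the unitary `U` with eigenvalues `lam`, positive
eigenvalues listed first), it is the Hadamard product of `[x^s,λ]^{[1,0]}` with the block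
matrix `[[ν_B, ν_C],[ν_C†, ν_D^s]]`. -/
def Gmat {n : ℕ} (s : ℝ) (m : ℕ) (U : Matrix (Fin n) (Fin n) ℂ) (lam : Fin n → ℝ)
    (ν : Matrix (Fin n) (Fin n) ℂ) : Matrix (Fin n) (Fin n) ℂ :=
  U * (Matrix.of fun k l =>
    (dd10 s lam k l : ℂ) *
      (if hk : m ≤ k.val then
        if hl : m ≤ l.val then
          mpow s (blockD m (Uᴴ * ν * U)) ⟨k, hk⟩ ⟨l, hl⟩
        else (Uᴴ * ν * U) k l
      else (Uᴴ * ν * U) k l)) * Uᴴ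

/-- Fréchet derivative restricted to the support block (`H₊`): the matrix
`Σ_{k,l<m} [f,λ]^{[1]}_{k,l} ⟨φ_k, ν φ_l⟩ |φ_k⟩⟨φ_l|` written as an `m×m` block. -/
def frechetB {n : ℕ} (m : ℕ) (f : ℝ → ℝ) (lam : Fin n → ℝ)
    (νhat : Matrix (Fin n) (Fin n) ℂ) :
    Matrix {k : Fin n // k.val < m} {k : Fin n // k.val < m} ℂ :=
  Matrix.of fun k l => (dd1 f lam k.val l.val : ℂ) * νhat k.val l.val

/-! In the eigenbasis of `ρ₀` both Fréchet derivatives are Hadamard products with the same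
Hermitian matrix `ν̂ = U†νU`, so `Tr[L_f L_g] = Σ_{k,l} [f]_{kl} [g]_{kl} |ν̂_{kl}|²` and it suffices
to compare divided differences entrywise. Off the diagonal this is
`(a^s - b^s)(a^{1-s} - b^{1-s}) ≤ (√a - √b)²`, i.e. AM–GM for `a^s b^{1-s}` and `a^{1-s} b^s`,
whose product is `ab`; on the diagonal it is `s(1-s) ≤ 1/4`. -/

lemma dd1_comm {n : ℕ} (f : ℝ → ℝ) (lam : Fin n → ℝ) (k l : Fin n) :
    dd1 f lam l k = dd1 f lam k l := by
  unfold dd1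
  by_cases h : lam k = lam l
  · rw [if_pos h.symm, if_pos h, h]
  · rw [if_neg (Ne.symm h), if_neg h, ← neg_sub (f (lam k)), ← neg_sub (lam k), neg_div_neg_eq]

lemma pos_of_posDef_unitary_conj_diagonal {n : ℕ} {U : Matrix (Fin n) (Fin n) ℂ}
    (hU : U ∈ unitaryGroup (Fin n) ℂ) {lam : Fin n → ℝ}
    (hpos : (U * diagonal (fun k => (lam k : ℂ)) * Uᴴ).PosDef) (k : Fin n) : 0 < lam k := by
  have hUU : Uᴴ * U = 1 := Unitary.star_mul_self_of_mem hU
  have hinj : Function.Injective U.mulVec :=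
    Function.LeftInverse.injective (g := Uᴴ.mulVec) fun x => by rw [mulVec_mulVec, hUU, one_mulVec]
  have hdiag := hpos.conjTranspose_mul_mul_same hinj
  rw [← mul_assoc, ← mul_assoc, hUU, one_mul, mul_assoc, hUU, mul_one,
    posDef_diagonal_iff] at hdiag
  exact_mod_cast hdiag k

lemma trace_frechet_mul_frechet {n : ℕ} {U : Matrix (Fin n) (Fin n) ℂ}
    (hU : U ∈ unitaryGroup (Fin n) ℂ) (f g : ℝ → ℝ) (lam : Fin n → ℝ)
    (E : Matrix (Fin n) (Fin n) ℂ) :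
    (frechet f U lam E * frechet g U lam E).trace =
      (of (fun k l => (dd1 f lam k l : ℂ) * (Uᴴ * E * U) k l) *
        of (fun k l => (dd1 g lam k l : ℂ) * (Uᴴ * E * U) k l)).trace := by
  have hUU : Uᴴ * U = 1 := Unitary.star_mul_self_of_mem hU
  simp only [frechet, mul_assoc]
  rw [← mul_assoc Uᴴ U, hUU, one_mul, trace_mul_comm, mul_assoc, mul_assoc, hUU, mul_one]

lemma re_trace_of_mul_of_hermitian {ι : Type*} [Fintype ι] (a b : ι → ι → ℝ)
    (hb : ∀ k l, b l k = b k l) {H : Matrix ι ι ℂ} (hH : H.IsHermitian) :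
    (of (fun k l => (a k l : ℂ) * H k l) * of (fun k l => (b k l : ℂ) * H k l)).trace.re =
      ∑ k, ∑ l, a k l * b k l * Complex.normSq (H k l) := by
  simp only [trace, diag, mul_apply, of_apply, Complex.re_sum]
  refine Finset.sum_congr rfl fun k _ => Finset.sum_congr rfl fun l _ => ?_
  rw [hb, ← hH.apply l k, mul_mul_mul_comm, Complex.star_def, Complex.mul_conj]
  norm_cast

lemma deriv_rpow_mul_deriv_rpow_one_sub_le {a : ℝ} (ha : 0 < a) (s : ℝ) :
    deriv (fun x : ℝ => x ^ s) a * deriv (fun x : ℝ => x ^ (1 - s)) a ≤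
      deriv Real.sqrt a * deriv Real.sqrt a := by
  rw [Real.deriv_rpow_const, Real.deriv_rpow_const, (Real.hasDerivAt_sqrt ha.ne').deriv]
  have hinv : a ^ (s - 1) * a ^ (1 - s - 1) = a⁻¹ := by
    rw [← Real.rpow_add ha, show s - 1 + (1 - s - 1) = -1 by ring, Real.rpow_neg_one]
  calc s * a ^ (s - 1) * ((1 - s) * a ^ (1 - s - 1)) = s * (1 - s) * a⁻¹ := by
        rw [← hinv]; ring
    _ ≤ 1 / 4 * a⁻¹ := by gcongr; nlinarith [sq_nonneg (s - 1 / 2)]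
    _ = 1 / (2 * √a) * (1 / (2 * √a)) := by
        field_simp; rw [Real.sq_sqrt ha.le]; ring

lemma rpow_sub_mul_rpow_one_sub_sub_le {a b : ℝ} (ha : 0 < a) (hb : 0 < b) (s : ℝ) :
    (a ^ s - b ^ s) * (a ^ (1 - s) - b ^ (1 - s)) ≤ (√a - √b) * (√a - √b) := by
  have ea : a ^ s * a ^ (1 - s) = a := by rw [← Real.rpow_add ha]; norm_num
  have eb : b ^ s * b ^ (1 - s) = b := by rw [← Real.rpow_add hb]; norm_num
  have sa := Real.mul_self_sqrt ha.le
  have sb := Real.mul_self_sqrt hb.le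
  set x := a ^ s * b ^ (1 - s)
  set y := a ^ (1 - s) * b ^ s
  have hxy : x * y = (√a * √b) * (√a * √b) :=
    calc x * y = (a ^ s * a ^ (1 - s)) * (b ^ s * b ^ (1 - s)) := by ring
      _ = a * b := by rw [ea, eb]
      _ = (√a * √b) * (√a * √b) := by linear_combination (-(√b * √b)) * sa - a * sb
  have amgm : 2 * (√a * √b) ≤ x + y := by
    nlinarith [sq_nonneg (x - y), Real.sqrt_nonneg a, Real.sqrt_nonneg b, show 0 < x by positivity,
      show 0 < y by positivity]
  linear_combination amgm + ea + eb - sa - sb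

lemma dd1_rpow_mul_dd1_rpow_one_sub_le {n : ℕ} {lam : Fin n → ℝ} (hlam : ∀ k, 0 < lam k)
    (s : ℝ) (k l : Fin n) :
    dd1 (fun x : ℝ => x ^ s) lam k l * dd1 (fun x : ℝ => x ^ (1 - s)) lam k l ≤
      dd1 Real.sqrt lam k l * dd1 Real.sqrt lam k l := by
  unfold dd1
  split_ifs with h
  · exact deriv_rpow_mul_deriv_rpow_one_sub_le (hlam k) s
  · rw [div_mul_div_comm, div_mul_div_comm]
    exact div_le_div_of_nonneg_right (rpow_sub_mul_rpow_one_sub_sub_le (hlam k) (hlam l) s)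
      (mul_self_nonneg _)

theorem trace_frechet_pow_le_frechet_sqrt_sq_general {n : ℕ} (ρ₀ : Matrix (Fin n) (Fin n) ℂ)
    (hρ₀ : ρ₀.PosDef)
    (U : Matrix (Fin n) (Fin n) ℂ) (hU : U ∈ Matrix.unitaryGroup (Fin n) ℂ)
    (lam : Fin n → ℝ)
    (hdecomp : ρ₀ = U * Matrix.diagonal (fun k => (lam k : ℂ)) * Uᴴ)
    (ν : Matrix (Fin n) (Fin n) ℂ) (hν : ν.IsHermitian)
    (s : ℝ) :
    (Matrix.trace (frechet (fun x : ℝ => x ^ s) U lam ν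
        * frechet (fun x : ℝ => x ^ (1 - s)) U lam ν)).re
      ≤ (Matrix.trace (frechet Real.sqrt U lam ν * frechet Real.sqrt U lam ν)).re := by
  have hlam := pos_of_posDef_unitary_conj_diagonal hU (hdecomp ▸ hρ₀)
  have hνU := isHermitian_conjTranspose_mul_mul U hν
  rw [trace_frechet_mul_frechet hU, trace_frechet_mul_frechet hU,
    re_trace_of_mul_of_hermitian _ _ (dd1_comm _ lam) hνU,
    re_trace_of_mul_of_hermitian _ _ (dd1_comm _ lam) hνU]
  refine Finset.sum_le_sum fun k _ => Finset.sum_le_sum fun l _ => ?_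
  exact mul_le_mul_of_nonneg_right (dd1_rpow_mul_dd1_rpow_one_sub_le hlam s k l)
    (Complex.normSq_nonneg _)

/-- The second-order quantum Chernoff coefficient is maximized at `s = 1/2`:
`Tr[L_{x^s}(ρ₀,ν) L_{x^{1−s}}(ρ₀,ν)] ≤ Tr[L_{√x}(ρ₀,ν)²]`. -/
theorem trace_frechet_pow_le_frechet_sqrt_sq {n : ℕ} (ρ₀ : Matrix (Fin n) (Fin n) ℂ)
    (hρ₀ : ρ₀.PosDef) (htr : ρ₀.trace = 1)
    (U : Matrix (Fin n) (Fin n) ℂ) (hU : U ∈ Matrix.unitaryGroup (Fin n) ℂ)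
    (lam : Fin n → ℝ)
    (hdecomp : ρ₀ = U * Matrix.diagonal (fun k => (lam k : ℂ)) * Uᴴ)
    (ν : Matrix (Fin n) (Fin n) ℂ) (hν : ν.IsHermitian)
    (s : ℝ) (hs : s ∈ Set.Icc (0 : ℝ) 1) :
    (Matrix.trace (frechet (fun x : ℝ => x ^ s) U lam ν
        * frechet (fun x : ℝ => x ^ (1 - s)) U lam ν)).re
      ≤ (Matrix.trace (frechet Real.sqrt U lam ν * frechet Real.sqrt U lam ν)).re :=
  trace_frechet_pow_le_frechet_sqrt_sq_general ρ₀ hρ₀ U hU lam hdecomp ν hν s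

end
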